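/- arXiv:2510.10662 — 5 statements merged into one kernel-verified Lean document; each statement's English description precedes it below -/
import Mathlib

section
/- Let (𝔄, 𝔄₀) be a *-semisimple CQ*-algebra with unit I. If α ∈ ℂ is a generalized eigenvalue of X ∈ 𝔄 (i.e., there exist φ ∈ P(𝔄) and A ∈ 𝔄₀ with φ(A,A) > 0 and φ(XA − αA, B) = 0 for all B ∈ 𝔄₀), then X − αI has no generalized left inverse, i.e., there is no Y ∈ 𝔄 with φ((X−αI)A, Y*B) = φ(A,B) for all bounded invariant positive sesquilinear forms φ with constant ≤ 1 and all A, B ∈ 𝔄₀. -/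
open scoped ComplexOrder

/-- The set `P_{𝔄₀}(𝔄)` of bounded invariant positive sesquilinear forms, with
explicit bound constant `γ`. -/
def IsIPS {A₀ A : Type*} [NormedRing A₀] [StarRing A₀] [NormedAlgebra ℂ A₀]
    [NormedAddCommGroup A] [NormedSpace ℂ A] [Star A]
    (j : A₀ →ₗ[ℂ] A) (mulR : A → A₀ → A) (φ : A → A → ℂ) (γ : ℝ) : Prop :=
  (∀ X : A, 0 ≤ φ X X) ∧
  (∀ X Y Z : A, φ (X + Y) Z = φ X Z + φ Y Z) ∧
  (∀ X Y Z : A, φ X (Y + Z) = φ X Y + φ X Z) ∧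
  (∀ (c : ℂ) (X Y : A), φ (c • X) Y = c * φ X Y) ∧
  (∀ (c : ℂ) (X Y : A), φ X (c • Y) = (starRingEnd ℂ c) * φ X Y) ∧
  (∀ (X : A) (a b : A₀), φ (mulR X a) (j b) = φ (j a) (mulR (star X) b)) ∧
  (∀ X Y : A, ‖φ X Y‖ ≤ γ * ‖X‖ * ‖Y‖)

/-!
Rescaled by `1/γ`, the eigen-form `φ` lies in `S(𝔄)`, so a generalized left inverse `Y` of
`X - αI` gives `φ((X - αI)a, Y*c) = φ(a, c)`. The vector `(X - αI)a` is `φ`-orthogonal to `𝔄₀`,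
hence, `φ` being continuous and `𝔄₀` dense, to all of `𝔄`; so `φ(a, c) = 0` for every `c ∈ 𝔄₀`
and, by density again, `φ(a, a) = 0`.
-/

namespace IsIPS

variable {A₀ A : Type*} [NormedRing A₀] [StarRing A₀] [NormedAlgebra ℂ A₀]
    [NormedAddCommGroup A] [NormedSpace ℂ A] [Star A]
    {j : A₀ →ₗ[ℂ] A} {mulR : A → A₀ → A} {φ : A → A → ℂ} {γ : ℝ}

theorem continuous_right (hφ : IsIPS j mulR φ γ) (Z : A) : Continuous (φ Z) := by
  obtain ⟨-, -, hadd, -, -, -, hbd⟩ := hφ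
  exact AddMonoidHomClass.continuous_of_bound (AddMonoidHom.mk' (φ Z) (hadd Z)) (γ * ‖Z‖)
    (hbd Z)

theorem eq_zero_of_forall_range (hφ : IsIPS j mulR φ γ) (hj : DenseRange j) {Z : A}
    (hZ : ∀ b : A₀, φ Z (j b) = 0) (W : A) : φ Z W = 0 := by
  have : φ Z = fun _ => 0 :=
    hj.equalizer (hφ.continuous_right Z) continuous_const (funext hZ)
  exact congrFun this W

theorem const_mul (hφ : IsIPS j mulR φ γ) {c : ℝ} (hc : 0 ≤ c) :
    IsIPS j mulR (fun U V => (c : ℂ) * φ U V) (c * γ) := by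
  obtain ⟨hpos, haddl, haddr, hsmull, hsmulr, hinv, hbd⟩ := hφ
  refine ⟨fun U => mul_nonneg (by exact_mod_cast hc) (hpos U), ?_, ?_, ?_, ?_, ?_, ?_⟩
  · intro U V W; simp only [haddl]; ring
  · intro U V W; simp only [haddr]; ring
  · intro d U V; simp only [hsmull]; ring
  · intro d U V; simp only [hsmulr]; ring
  · intro U a b; simp only [hinv]
  · intro U V
    rw [norm_mul, Complex.norm_real, Real.norm_of_nonneg hc, mul_assoc c, mul_assoc c]
    exact mul_le_mul_of_nonneg_left (hbd U V) hc

theorem normalize (hφ : IsIPS j mulR φ γ) (hγ : 0 < γ) :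
    IsIPS j mulR (fun U V => ((γ⁻¹ : ℝ) : ℂ) * φ U V) 1 := by
  simpa only [inv_mul_cancel₀ hγ.ne'] using hφ.const_mul (inv_nonneg.2 hγ.le)

end IsIPS

theorem stmt7_general {A₀ : Type*} [NormedRing A₀] [StarRing A₀]
    [NormedAlgebra ℂ A₀]
    {A : Type*} [NormedAddCommGroup A] [NormedSpace ℂ A] [Star A]
    (j : A₀ →ₗ[ℂ] A) (hj_dense : DenseRange j)
    (mulR : A → A₀ → A)
    -- the module product 𝔄 × 𝔄₀ → 𝔄 is linear in the first variable and extends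
    -- the multiplication of 𝔄₀:
    (hm_sub : ∀ (X Y : A) (a : A₀), mulR (X - Y) a = mulR X a - mulR Y a)
    (hm_smul : ∀ (c : ℂ) (X : A) (a : A₀), mulR (c • X) a = c • mulR X a)
    (hm_mul : ∀ a b : A₀, mulR (j a) b = j (a * b))
    -- α is a generalized eigenvalue of X, witnessed by φ ∈ P(𝔄) and A ∈ 𝔄₀:
    (X : A) (α : ℂ)
    (φ : A → A → ℂ) (γ : ℝ) (hγ : 0 < γ) (hφ : IsIPS j mulR φ γ)
    (a : A₀) (ha : 0 < φ (j a) (j a))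
    (heig : ∀ b : A₀, φ (mulR X a - α • j a) (j b) = 0) :
    ¬ ∃ Y : A, ∀ (ψ : A → A → ℂ), IsIPS j mulR ψ 1 →
        ∀ b c : A₀, ψ (mulR (X - α • j 1) b) (mulR (star Y) c) = ψ (j b) (j c) := by
  rintro ⟨Y, hY⟩
  have hshift : mulR (X - α • j 1) a = mulR X a - α • j a := by
    rw [hm_sub, hm_smul, hm_mul, one_mul]
  have horth : ∀ W : A, φ (mulR X a - α • j a) W = 0 :=
    hφ.eq_zero_of_forall_range hj_dense heig
  have hja : ∀ c : A₀, φ (j a) (j c) = 0 := by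
    intro c
    have h := hY _ (hφ.normalize hγ) a c
    rw [hshift, horth, mul_zero, eq_comm] at h
    exact (mul_eq_zero.mp h).resolve_left (by exact_mod_cast (inv_pos.2 hγ).ne')
  exact ha.ne' (hφ.eq_zero_of_forall_range hj_dense hja (j a))

/-- in a *-semisimple CQ*-algebra with unit, if `α` is a generalized
eigenvalue of `X` then `X - αI` has no generalized left inverse. -/
theorem stmt7 {A₀ : Type*} [NormedRing A₀] [StarRing A₀] [CStarRing A₀]
    [NormedAlgebra ℂ A₀] [StarModule ℂ A₀] [NormedStarGroup A₀]
    {A : Type*} [NormedAddCommGroup A] [NormedSpace ℂ A] [Star A]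
    (j : A₀ →ₗ[ℂ] A) (hj_dense : DenseRange j)
    (mulR : A → A₀ → A)
    -- the module product 𝔄 × 𝔄₀ → 𝔄 is linear in the first variable and extends
    -- the multiplication of 𝔄₀:
    (hm_add : ∀ (X Y : A) (a : A₀), mulR (X + Y) a = mulR X a + mulR Y a)
    (hm_sub : ∀ (X Y : A) (a : A₀), mulR (X - Y) a = mulR X a - mulR Y a)
    (hm_smul : ∀ (c : ℂ) (X : A) (a : A₀), mulR (c • X) a = c • mulR X a)
    (hm_mul : ∀ a b : A₀, mulR (j a) b = j (a * b))
    -- *-semisimplicity: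
    (hss : ∀ Y : A, Y ≠ 0 → ∃ ψ : A → A → ℂ, IsIPS j mulR ψ 1 ∧ 0 < ψ Y Y)
    -- α is a generalized eigenvalue of X, witnessed by φ ∈ P(𝔄) and A ∈ 𝔄₀:
    (X : A) (α : ℂ)
    (φ : A → A → ℂ) (γ : ℝ) (hγ : 0 < γ) (hφ : IsIPS j mulR φ γ) (hφ_ne : φ ≠ 0)
    (a : A₀) (ha : 0 < φ (j a) (j a))
    (heig : ∀ b : A₀, φ (mulR X a - α • j a) (j b) = 0) :
    ¬ ∃ Y : A, ∀ (ψ : A → A → ℂ), IsIPS j mulR ψ 1 →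
        ∀ b c : A₀, ψ (mulR (X - α • j 1) b) (mulR (star Y) c) = ψ (j b) (j c) :=
  stmt7_general j hj_dense mulR hm_sub hm_smul hm_mul X α φ γ hγ hφ a ha heig
end

section
/- Let X be a normal element of a *-semisimple CQ*-algebra (𝔄, 𝔄₀), with cartesian decomposition X = U + iV where U = U*, V = V*. Then φ(UA, VA) = φ(VA, UA) for every bounded invariant positive sesquilinear form φ and every A ∈ 𝔄₀. -/
open scoped ComplexOrder

open Complex

def IsIPS.toSesqForm {A₀ A : Type*} [NormedRing A₀] [StarRing A₀] [NormedAlgebra ℂ A₀]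
    [NormedAddCommGroup A] [NormedSpace ℂ A] [Star A]
    {j : A₀ →ₗ[ℂ] A} {mulR : A → A₀ → A} {φ : A → A → ℂ} {γ : ℝ}
    (hφ : IsIPS j mulR φ γ) : A →ₗ[ℂ] A →ₗ⋆[ℂ] ℂ :=
  LinearMap.mk₂'ₛₗ (RingHom.id ℂ) (starRingEnd ℂ) φ hφ.2.1 hφ.2.2.2.1 hφ.2.2.1 hφ.2.2.2.2.1

-- `B(u + iv, u + iv) - B(u - iv, u - iv) = 2i (B(v, u) - B(u, v))`
theorem LinearMap.apply_add_I_smul_self_eq_iff {E : Type*} [AddCommGroup E] [Module ℂ E]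
    (B : E →ₗ[ℂ] E →ₗ⋆[ℂ] ℂ) (u v : E) :
    B (u + I • v) (u + I • v) = B (u - I • v) (u - I • v) ↔ B u v = B v u := by
  simp only [map_add, map_sub, map_smul, LinearMap.add_apply, LinearMap.sub_apply,
    LinearMap.smul_apply, map_smulₛₗ, smul_eq_mul, conj_I]
  constructor
  · intro h
    apply mul_left_cancel₀ (mul_ne_zero two_ne_zero I_ne_zero : (2 : ℂ) * I ≠ 0)
    linear_combination -h
  · intro h
    linear_combination (-2 * I) * h

theorem cartesian_add_I_smul_eq {E : Type*} [AddCommGroup E] [Module ℂ E] (x y : E) :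
    (2 : ℂ)⁻¹ • (x + y) + I • ((2 * I)⁻¹ • (x - y)) = x := by
  match_scalars <;> field_simp <;> ring

theorem cartesian_sub_I_smul_eq {E : Type*} [AddCommGroup E] [Module ℂ E] (x y : E) :
    (2 : ℂ)⁻¹ • (x + y) - I • ((2 * I)⁻¹ • (x - y)) = y := by
  match_scalars <;> field_simp <;> ring

theorem stmt8_general {A₀ : Type*} [NormedRing A₀] [StarRing A₀]
    [NormedAlgebra ℂ A₀]
    {A : Type*} [NormedAddCommGroup A] [NormedSpace ℂ A] [Star A]
    (j : A₀ →ₗ[ℂ] A)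
    (mulR : A → A₀ → A)
    (hm_add : ∀ (X Y : A) (a : A₀), mulR (X + Y) a = mulR X a + mulR Y a)
    (hm_sub : ∀ (X Y : A) (a : A₀), mulR (X - Y) a = mulR X a - mulR Y a)
    (hm_smul : ∀ (c : ℂ) (X : A) (a : A₀), mulR (c • X) a = c • mulR X a)
    -- X normal, with cartesian decomposition X = U + iV:
    (X : A)
    (hX_normal : ∀ (φ : A → A → ℂ) (γ : ℝ), 0 < γ → IsIPS j mulR φ γ →
      ∀ a : A₀, φ (mulR X a) (mulR X a) = φ (mulR (star X) a) (mulR (star X) a))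
    (U V : A)
    (hU : U = (2 : ℂ)⁻¹ • (X + star X))
    (hV : V = (2 * Complex.I)⁻¹ • (X - star X)) :
    ∀ (φ : A → A → ℂ) (γ : ℝ), 0 < γ → IsIPS j mulR φ γ →
      ∀ a : A₀, φ (mulR U a) (mulR V a) = φ (mulR V a) (mulR U a) := by
  intro φ γ hγ hφ a
  have hX : X = U + I • V := by rw [hU, hV, cartesian_add_I_smul_eq]
  have hX_star : star X = U - I • V := by rw [hU, hV, cartesian_sub_I_smul_eq]
  have hnormal := hX_normal φ γ hγ hφ a
  rw [hX_star, hX, hm_add, hm_sub, hm_smul] at hnormal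
  exact (hφ.toSesqForm.apply_add_I_smul_self_eq_iff _ _).mp hnormal

/-- if `X = U + iV` is the cartesian decomposition of a normal element
of a *-semisimple CQ*-algebra, then `φ(UA, VA) = φ(VA, UA)` for every bounded
invariant positive sesquilinear form `φ` and every `A ∈ 𝔄₀`. -/
theorem stmt8 {A₀ : Type*} [NormedRing A₀] [StarRing A₀] [CStarRing A₀]
    [NormedAlgebra ℂ A₀] [StarModule ℂ A₀] [NormedStarGroup A₀]
    {A : Type*} [NormedAddCommGroup A] [NormedSpace ℂ A] [Star A]
    (j : A₀ →ₗ[ℂ] A) (hj_dense : DenseRange j)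
    (mulR : A → A₀ → A)
    (hm_add : ∀ (X Y : A) (a : A₀), mulR (X + Y) a = mulR X a + mulR Y a)
    (hm_sub : ∀ (X Y : A) (a : A₀), mulR (X - Y) a = mulR X a - mulR Y a)
    (hm_smul : ∀ (c : ℂ) (X : A) (a : A₀), mulR (c • X) a = c • mulR X a)
    -- involution on 𝔄:
    (hstar_star : ∀ X : A, star (star X) = X)
    (hstar_add : ∀ X Y : A, star (X + Y) = star X + star Y)
    (hstar_sub : ∀ X Y : A, star (X - Y) = star X - star Y)
    (hstar_smul : ∀ (c : ℂ) (X : A), star (c • X) = (starRingEnd ℂ c) • star X)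
    -- *-semisimplicity:
    (hss : ∀ Y : A, Y ≠ 0 → ∃ ψ : A → A → ℂ, IsIPS j mulR ψ 1 ∧ 0 < ψ Y Y)
    -- X normal, with cartesian decomposition X = U + iV:
    (X : A)
    (hX_normal : ∀ (φ : A → A → ℂ) (γ : ℝ), 0 < γ → IsIPS j mulR φ γ →
      ∀ a : A₀, φ (mulR X a) (mulR X a) = φ (mulR (star X) a) (mulR (star X) a))
    (U V : A)
    (hU : U = (2 : ℂ)⁻¹ • (X + star X))
    (hV : V = (2 * Complex.I)⁻¹ • (X - star X)) :
    ∀ (φ : A → A → ℂ) (γ : ℝ), 0 < γ → IsIPS j mulR φ γ →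
      ∀ a : A₀, φ (mulR U a) (mulR V a) = φ (mulR V a) (mulR U a) :=
  stmt8_general j mulR hm_add hm_sub hm_smul X hX_normal U V hU hV
end

section
/- A normal element X of a *-semisimple CQ*-algebra satisfies, for every φ ∈ P(𝔄), every A ∈ 𝔄₀ and every α ∈ ℂ: φ(XA − αA, XA − αA) = φ(X*A − ᾱA, X*A − ᾱA). Consequently, φ is a generalized eigenvector of X with eigenvalue α if and only if φ is a generalized eigenvector of X* with eigenvalue ᾱ. -/
open scoped ComplexOrder

/-- `φ` is a generalized eigenvector of `X` with generalized eigenvalue `α`: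
there is `A ∈ 𝔄₀` with `φ(A,A) > 0` and `φ(XA - αA, XA - αA) = 0`. -/
def IsGenEigenvector {A₀ A : Type*} [NormedRing A₀] [StarRing A₀]
    [NormedAlgebra ℂ A₀] [NormedAddCommGroup A] [NormedSpace ℂ A] [Star A]
    (j : A₀ →ₗ[ℂ] A) (mulR : A → A₀ → A) (φ : A → A → ℂ) (X : A) (α : ℂ) : Prop :=
  ∃ a : A₀, 0 < φ (j a) (j a) ∧
    φ (mulR X a - α • j a) (mulR X a - α • j a) = 0

namespace IsIPS

variable {A₀ A : Type*} [NormedRing A₀] [StarRing A₀] [NormedAlgebra ℂ A₀]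
  [NormedAddCommGroup A] [NormedSpace ℂ A] [Star A]
  {j : A₀ →ₗ[ℂ] A} {mulR : A → A₀ → A} {φ : A → A → ℂ} {γ : ℝ}

theorem map_sub_left (h : IsIPS j mulR φ γ) (U V W : A) : φ (U - V) W = φ U W - φ V W :=
  eq_sub_of_add_eq (by rw [← h.2.1, sub_add_cancel])

theorem map_sub_right (h : IsIPS j mulR φ γ) (U V W : A) : φ U (V - W) = φ U V - φ U W :=
  eq_sub_of_add_eq (by rw [← h.2.2.1, sub_add_cancel])

theorem apply_sub_smul_sub_smul (h : IsIPS j mulR φ γ) (U B : A) (c : ℂ) :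
    φ (U - c • B) (U - c • B) =
      φ U U - starRingEnd ℂ c * φ U B - c * φ B U + c * starRingEnd ℂ c * φ B B := by
  obtain ⟨hsmul_left, hsmul_right, -⟩ := h.2.2.2
  rw [h.map_sub_left, h.map_sub_right, h.map_sub_right, hsmul_left, hsmul_left,
    hsmul_right, hsmul_right]
  ring

/-- The cross terms of `φ(XA - αA, XA - αA)` are turned by invariance into those of
`φ(X*A - ᾱA, X*A - ᾱA)` with the roles of `α` and `ᾱ` exchanged. -/
theorem apply_mulR_sub_smul_eq_star (h : IsIPS j mulR φ γ) {X : A}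
    (hstar : star (star X) = X) (a : A₀)
    (hnormal : φ (mulR X a) (mulR X a) = φ (mulR (star X) a) (mulR (star X) a)) (α : ℂ) :
    φ (mulR X a - α • j a) (mulR X a - α • j a) =
      φ (mulR (star X) a - starRingEnd ℂ α • j a)
        (mulR (star X) a - starRingEnd ℂ α • j a) := by
  have hinv := h.2.2.2.2.2.1 X a a
  have hinv_star := h.2.2.2.2.2.1 (star X) a a
  rw [hstar] at hinv_star
  rw [h.apply_sub_smul_sub_smul, h.apply_sub_smul_sub_smul, hnormal, hinv, hinv_star,
    Complex.conj_conj]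
  ring

end IsIPS

theorem isGenEigenvector_iff_of_forall_eq {A₀ A : Type*} [NormedRing A₀] [StarRing A₀]
    [NormedAlgebra ℂ A₀] [NormedAddCommGroup A] [NormedSpace ℂ A] [Star A]
    {j : A₀ →ₗ[ℂ] A} {mulR : A → A₀ → A} {φ : A → A → ℂ} {X Y : A} {α β : ℂ}
    (h : ∀ a : A₀, φ (mulR X a - α • j a) (mulR X a - α • j a) =
      φ (mulR Y a - β • j a) (mulR Y a - β • j a)) :
    IsGenEigenvector j mulR φ X α ↔ IsGenEigenvector j mulR φ Y β :=
  exists_congr fun a => and_congr_right' (by rw [h a])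

theorem stmt9_general {A₀ : Type*} [NormedRing A₀] [StarRing A₀]
    [NormedAlgebra ℂ A₀]
    {A : Type*} [NormedAddCommGroup A] [NormedSpace ℂ A] [Star A]
    (j : A₀ →ₗ[ℂ] A)
    (mulR : A → A₀ → A)
    (hstar_star : ∀ X : A, star (star X) = X)
    -- X normal:
    (X : A)
    (hX_normal : ∀ (φ : A → A → ℂ) (γ : ℝ), 0 < γ → IsIPS j mulR φ γ →
      ∀ a : A₀, φ (mulR X a) (mulR X a) = φ (mulR (star X) a) (mulR (star X) a)) :
    (∀ (φ : A → A → ℂ) (γ : ℝ), 0 < γ → IsIPS j mulR φ γ → ∀ (a : A₀) (α : ℂ),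
        φ (mulR X a - α • j a) (mulR X a - α • j a)
          = φ (mulR (star X) a - (starRingEnd ℂ α) • j a)
              (mulR (star X) a - (starRingEnd ℂ α) • j a)) ∧
    (∀ (φ : A → A → ℂ) (γ : ℝ), 0 < γ → IsIPS j mulR φ γ → ∀ α : ℂ,
        (IsGenEigenvector j mulR φ X α ↔
          IsGenEigenvector j mulR φ (star X) (starRingEnd ℂ α))) := by
  have key (φ : A → A → ℂ) (γ : ℝ) (hγ : 0 < γ) (hφ : IsIPS j mulR φ γ) (a : A₀) :=
    hφ.apply_mulR_sub_smul_eq_star (hstar_star X) a (hX_normal φ γ hγ hφ a)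
  exact ⟨key, fun φ γ hγ hφ α => isGenEigenvector_iff_of_forall_eq (key φ γ hγ hφ · α)⟩

/-- a normal element `X` of a *-semisimple CQ*-algebra satisfies
`φ(XA - αA, XA - αA) = φ(X*A - ᾱA, X*A - ᾱA)` for every `φ ∈ P(𝔄)`, `A ∈ 𝔄₀`,
`α ∈ ℂ`; consequently `φ` is a generalized eigenvector of `X` with eigenvalue `α`
iff it is a generalized eigenvector of `X*` with eigenvalue `ᾱ`. -/
theorem stmt9 {A₀ : Type*} [NormedRing A₀] [StarRing A₀] [CStarRing A₀]
    [NormedAlgebra ℂ A₀] [StarModule ℂ A₀] [NormedStarGroup A₀]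
    {A : Type*} [NormedAddCommGroup A] [NormedSpace ℂ A] [Star A]
    (j : A₀ →ₗ[ℂ] A) (hj_dense : DenseRange j)
    (mulR : A → A₀ → A)
    (hm_add : ∀ (X Y : A) (a : A₀), mulR (X + Y) a = mulR X a + mulR Y a)
    (hm_sub : ∀ (X Y : A) (a : A₀), mulR (X - Y) a = mulR X a - mulR Y a)
    (hm_smul : ∀ (c : ℂ) (X : A) (a : A₀), mulR (c • X) a = c • mulR X a)
    (hstar_star : ∀ X : A, star (star X) = X)
    (hstar_add : ∀ X Y : A, star (X + Y) = star X + star Y)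
    (hstar_smul : ∀ (c : ℂ) (X : A), star (c • X) = (starRingEnd ℂ c) • star X)
    -- *-semisimplicity:
    (hss : ∀ Y : A, Y ≠ 0 → ∃ ψ : A → A → ℂ, IsIPS j mulR ψ 1 ∧ 0 < ψ Y Y)
    -- X normal:
    (X : A)
    (hX_normal : ∀ (φ : A → A → ℂ) (γ : ℝ), 0 < γ → IsIPS j mulR φ γ →
      ∀ a : A₀, φ (mulR X a) (mulR X a) = φ (mulR (star X) a) (mulR (star X) a)) :
    (∀ (φ : A → A → ℂ) (γ : ℝ), 0 < γ → IsIPS j mulR φ γ → ∀ (a : A₀) (α : ℂ),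
        φ (mulR X a - α • j a) (mulR X a - α • j a)
          = φ (mulR (star X) a - (starRingEnd ℂ α) • j a)
              (mulR (star X) a - (starRingEnd ℂ α) • j a)) ∧
    (∀ (φ : A → A → ℂ) (γ : ℝ), 0 < γ → IsIPS j mulR φ γ → ∀ α : ℂ,
        (IsGenEigenvector j mulR φ X α ↔
          IsGenEigenvector j mulR φ (star X) (starRingEnd ℂ α))) :=
  stmt9_general j mulR hstar_star X hX_normal
end

section
/- If X = X* in a CQ*-algebra and α is a generalized eigenvalue of X (i.e., there exist φ ∈ P(𝔄) and A ∈ 𝔄₀ with φ(A,A) > 0 and φ(XA − αA, XA − αA) = 0), then α is real. -/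
open scoped ComplexOrder
open ComplexConjugate

/-!
A positive sesquilinear form is Hermitian, so it is a semi-inner product and satisfies
Cauchy–Schwarz; hence `φ(XA - αA, XA - αA) = 0` forces `φ(XA - αA, A) = 0`, that is
`φ(XA, A) = α φ(A, A)`. Invariance and `X = X*` make `φ(XA, A) = φ(A, XA)` real, and
`φ(A, A) > 0`, so `α` is real.
-/

structure IsPosSesqForm {E : Type*} [AddCommGroup E] [Module ℂ E] (φ : E → E → ℂ) : Prop where
  nonneg : ∀ x, 0 ≤ φ x x
  add_left : ∀ x y z, φ (x + y) z = φ x z + φ y z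
  add_right : ∀ x y z, φ x (y + z) = φ x y + φ x z
  smul_left : ∀ (c : ℂ) x y, φ (c • x) y = c * φ x y
  smul_right : ∀ (c : ℂ) x y, φ x (c • y) = conj c * φ x y

namespace IsPosSesqForm

variable {E : Type*} [AddCommGroup E] [Module ℂ E] {φ : E → E → ℂ}

theorem im_apply_self (hφ : IsPosSesqForm φ) (x : E) : (φ x x).im = 0 :=
  (Complex.nonneg_iff.mp (hφ.nonneg x)).2.symm

theorem sub_left (hφ : IsPosSesqForm φ) (x y z : E) : φ (x - y) z = φ x z - φ y z := by
  rw [sub_eq_add_neg, ← neg_one_smul ℂ y, hφ.add_left, hφ.smul_left]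
  ring

/-- Polarization: positivity on the diagonal, tested at `x + y` and `x + I • y`. -/
theorem conj_apply (hφ : IsPosSesqForm φ) (x y : E) : conj (φ x y) = φ y x := by
  have h₁ := hφ.im_apply_self (x + y)
  have h₂ := hφ.im_apply_self (x + Complex.I • y)
  simp only [hφ.add_left, hφ.add_right, hφ.smul_left, hφ.smul_right, Complex.add_im,
    Complex.mul_im, Complex.mul_re, Complex.conj_I, Complex.neg_re, Complex.neg_im,
    Complex.I_re, Complex.I_im, hφ.im_apply_self] at h₁ h₂
  apply Complex.ext <;> simp only [Complex.conj_re, Complex.conj_im] <;> linarith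

/-- The arguments are swapped because Mathlib's inner products are conjugate-linear in the
first one. -/
abbrev toPreInnerProductSpaceCore (hφ : IsPosSesqForm φ) : PreInnerProductSpace.Core ℂ E where
  inner x y := φ y x
  conj_inner_symm x y := hφ.conj_apply x y
  re_inner_nonneg x := (Complex.nonneg_iff.mp (hφ.nonneg x)).1
  add_left x y z := hφ.add_right z x y
  smul_left x y c := hφ.smul_right c y x

theorem apply_eq_zero_of_apply_self_eq_zero (hφ : IsPosSesqForm φ) {v : E} (hv : φ v v = 0)
    (y : E) : φ v y = 0 := by
  let _ := hφ.toPreInnerProductSpaceCore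
  have hCS : ‖φ v y‖ * ‖φ y v‖ ≤ (φ y y).re * (φ v v).re :=
    InnerProductSpace.Core.inner_mul_inner_self_le (𝕜 := ℂ) y v
  rw [hv, ← hφ.conj_apply v y, Complex.norm_conj, Complex.zero_re, mul_zero] at hCS
  exact norm_eq_zero.mp (mul_self_eq_zero.mp (le_antisymm hCS (mul_self_nonneg _)))

end IsPosSesqForm

section IsIPS

variable {A₀ A : Type*} [NormedRing A₀] [StarRing A₀] [NormedAlgebra ℂ A₀]
  [NormedAddCommGroup A] [NormedSpace ℂ A] [Star A]
  {j : A₀ →ₗ[ℂ] A} {mulR : A → A₀ → A} {φ : A → A → ℂ} {γ : ℝ}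

theorem IsIPS.isPosSesqForm (hφ : IsIPS j mulR φ γ) : IsPosSesqForm φ :=
  ⟨hφ.1, hφ.2.1, hφ.2.2.1, hφ.2.2.2.1, hφ.2.2.2.2.1⟩

theorem IsIPS.im_apply_mulR_self_eq_zero (hφ : IsIPS j mulR φ γ) {X : A} (hX : star X = X)
    (a : A₀) : (φ (mulR X a) (j a)).im = 0 := by
  have hinv := hφ.2.2.2.2.2.1 X a a
  rw [hX, ← hφ.isPosSesqForm.conj_apply (mulR X a)] at hinv
  exact Complex.conj_eq_iff_im.mp hinv.symm

end IsIPS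

theorem stmt10_general {A₀ : Type*} [NormedRing A₀] [StarRing A₀]
    [NormedAlgebra ℂ A₀]
    {A : Type*} [NormedAddCommGroup A] [NormedSpace ℂ A] [Star A]
    (j : A₀ →ₗ[ℂ] A)
    (mulR : A → A₀ → A)
    (X : A) (hX : star X = X) (α : ℂ)
    (φ : A → A → ℂ) (γ : ℝ) (hφ : IsIPS j mulR φ γ)
    (a : A₀) (ha : 0 < φ (j a) (j a))
    (heig : φ (mulR X a - α • j a) (mulR X a - α • j a) = 0) :
    α.im = 0 := by
  have hsesq := hφ.isPosSesqForm
  have hXa : φ (mulR X a) (j a) = α * φ (j a) (j a) := by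
    have h := hsesq.apply_eq_zero_of_apply_self_eq_zero heig (j a)
    rwa [hsesq.sub_left, hsesq.smul_left, sub_eq_zero] at h
  obtain ⟨ha_re, ha_im⟩ := Complex.pos_iff.mp ha
  have him := hφ.im_apply_mulR_self_eq_zero hX a
  rw [hXa, Complex.mul_im, ← ha_im, mul_zero, zero_add] at him
  exact (mul_eq_zero.mp him).resolve_right ha_re.ne'

/-- if `X = X*` in a CQ*-algebra and `α` is a generalized eigenvalue of
`X` (witnessed by some `φ ∈ P(𝔄)` and `A ∈ 𝔄₀` with `φ(A,A) > 0` and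
`φ(XA - αA, XA - αA) = 0`), then `α` is real. -/
theorem stmt10 {A₀ : Type*} [NormedRing A₀] [StarRing A₀] [CStarRing A₀]
    [NormedAlgebra ℂ A₀] [StarModule ℂ A₀] [NormedStarGroup A₀]
    {A : Type*} [NormedAddCommGroup A] [NormedSpace ℂ A] [Star A]
    (j : A₀ →ₗ[ℂ] A) (hj_dense : DenseRange j)
    (mulR : A → A₀ → A)
    (X : A) (hX : star X = X) (α : ℂ)
    (φ : A → A → ℂ) (γ : ℝ) (hγ : 0 < γ) (hφ : IsIPS j mulR φ γ)
    (a : A₀) (ha : 0 < φ (j a) (j a))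
    (heig : φ (mulR X a - α • j a) (mulR X a - α • j a) = 0) :
    α.im = 0 :=
  stmt10_general j mulR X hX α φ γ hφ a ha heig
end

section
/- Let ω̄ be a nondegenerate ground state for H = H* ∈ 𝔄 with ground energy α₊ (Ker(π_ω̄(H) − α₊I) = ℂλ_ω(I)). Then ω̄ is gapped with gap Δ > 0 (i.e., ω̄(A*HA) ≥ (α₊ + Δ)ω(A*A) for all A ∈ 𝔄₀ with λ_ω(A) ⟂ λ_ω(I)) if and only if −i ω̄(A* δ_H(A)) ≥ Δ(ω(A*A) − |ω(A)|²) for all A ∈ 𝔄₀. -/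
/-!
Write `Λ a = Λ b + c • Λ 1` with `c = ⟪Λ 1, Λ a⟫`, so that `Λ b ⟂ Λ 1`. Since `T - α` is
symmetric and kills `Λ 1`, the excitation energy `re ⟪(T - α) Λ a, Λ a⟫` equals that of `Λ b`,
while `‖Λ a‖² - |⟪Λ a, Λ 1⟫|² = ‖Λ b‖²`. Hence both conditions say the same thing about vectors
orthogonal to `Λ 1`.
-/

section

variable {E : Type*} [NormedAddCommGroup E] [InnerProductSpace ℂ E]

theorem LinearMap.IsSymmetric.re_inner_map_add_eigenvector_sub_mul_norm_sq {T : E →ₗ[ℂ] E}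
    (hT : T.IsSymmetric) {α : ℝ} {v : E} (hv : T v = (α : ℂ) • v) (x : E) :
    (inner ℂ (T (x + v)) (x + v)).re - α * ‖x + v‖ ^ 2 = (inner ℂ (T x) x).re - α * ‖x‖ ^ 2 := by
  have hTxv : inner ℂ (T x) v = α * inner ℂ x v := by rw [hT, hv, inner_smul_right]
  have hTvx : inner ℂ (T v) x = α * inner ℂ v x := by rw [hv, inner_smul_left, Complex.conj_ofReal]
  have hTvv : (inner ℂ (T v) v).re = α * ‖v‖ ^ 2 := by
    rw [hv, inner_smul_left, Complex.conj_ofReal, inner_self_eq_norm_sq_to_K, Complex.re_ofReal_mul]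
    norm_cast
  have hvx : (inner ℂ v x).re = (inner ℂ x v).re := inner_re_symm (𝕜 := ℂ) v x
  have hxv : ‖x + v‖ ^ 2 = ‖x‖ ^ 2 + 2 * (inner ℂ x v).re + ‖v‖ ^ 2 := norm_add_sq (𝕜 := ℂ) x v
  simp only [map_add, inner_add_left, inner_add_right, Complex.add_re, hTxv, hTvx,
    Complex.re_ofReal_mul, hTvv, hvx, hxv]
  ring

theorem inner_sub_inner_smul_self_eq_zero {u : E} (hu : ‖u‖ = 1) (x : E) :
    inner ℂ u (x - inner ℂ u x • u) = 0 := by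
  rw [inner_sub_right, inner_smul_right, inner_self_eq_norm_sq_to_K, hu]
  simp

theorem norm_sq_eq_norm_sub_inner_smul_sq_add {u : E} (hu : ‖u‖ = 1) (x : E) :
    ‖x‖ ^ 2 = ‖x - inner ℂ u x • u‖ ^ 2 + ‖inner ℂ u x‖ ^ 2 := by
  have hperp : inner ℂ (x - inner ℂ u x • u) (inner ℂ u x • u) = 0 := by
    rw [inner_smul_right, inner_eq_zero_symm.mp (inner_sub_inner_smul_self_eq_zero hu x), mul_zero]
  have h := norm_add_sq_eq_norm_sq_add_norm_sq_of_inner_eq_zero _ _ hperp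
  rw [sub_add_cancel, norm_smul, hu, mul_one] at h
  simpa only [sq] using h

end

theorem stmt18_general {A₀ : Type*} [NormedRing A₀] [NormedAlgebra ℂ A₀]
    {Hω : Type*} [NormedAddCommGroup Hω] [InnerProductSpace ℂ Hω]
    -- the GNS vector map Λ = λ_ω, with cyclic vector Λ 1 of norm one (ω(I) = 1):
    (Λ : A₀ →ₗ[ℂ] Hω) (hΛ1 : ‖Λ (1 : A₀)‖ = 1)
    -- T = π_ω̄(H), symmetric since H = H*:
    (T : Hω →ₗ[ℂ] Hω)
    (hT_symm : ∀ x y : Hω, (inner ℂ (T x) y : ℂ) = inner ℂ x (T y))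
    (αg : ℝ)
    -- ω̄ is an eigenstate of H with eigenvalue αg: π(H)λ(I) = αg λ(I):
    (heig : T (Λ 1) = (αg : ℂ) • Λ 1) :
    -- gapped  ↔  -i ω̄(A*δ_H(A)) ≥ Δ(ω(A*A) - |ω(A)|²)
    (∃ Δ > (0 : ℝ), ∀ a : A₀, (inner ℂ (Λ a) (Λ (1 : A₀)) : ℂ) = 0 →
        (αg + Δ) * ‖Λ a‖ ^ 2 ≤ (inner ℂ (T (Λ a)) (Λ a) : ℂ).re) ↔
    (∃ Δ > (0 : ℝ), ∀ a : A₀,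
        Δ * (‖Λ a‖ ^ 2 - ‖(inner ℂ (Λ a) (Λ (1 : A₀)) : ℂ)‖ ^ 2)
          ≤ (inner ℂ (T (Λ a)) (Λ a) : ℂ).re - αg * ‖Λ a‖ ^ 2) := by
  constructor
  · rintro ⟨Δ, hΔ, hgap⟩
    refine ⟨Δ, hΔ, fun a => ?_⟩
    set c := inner ℂ (Λ 1) (Λ a)
    have hΛb : Λ (a - c • 1) = Λ a - c • Λ 1 := by rw [map_sub, map_smul]
    have hperp : inner ℂ (Λ (a - c • 1)) (Λ 1) = 0 := by
      rw [hΛb, inner_eq_zero_symm]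
      exact inner_sub_inner_smul_self_eq_zero hΛ1 (Λ a)
    have henergy := LinearMap.IsSymmetric.re_inner_map_add_eigenvector_sub_mul_norm_sq hT_symm
      (v := c • Λ 1) (by rw [map_smul, heig, smul_comm]) (Λ a - c • Λ 1)
    rw [sub_add_cancel] at henergy
    have hgapb := hgap _ hperp
    rw [hΛb] at hgapb
    rw [norm_inner_symm, henergy, norm_sq_eq_norm_sub_inner_smul_sq_add hΛ1 (Λ a)]
    linarith
  · rintro ⟨Δ, hΔ, hspec⟩
    refine ⟨Δ, hΔ, fun a ha => ?_⟩
    have := hspec a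
    rw [ha, norm_zero] at this
    linarith

/-- let `ω̄` be a nondegenerate ground state for `H = H* ∈ 𝔄` with
ground energy `αg`, realized in its GNS representation by the symmetric operator
`T = π_ω̄(H)` on the GNS space, with cyclic map `Λ = λ_ω` (so that
`ω(A) = ⟨Λ A, Λ 1⟩`, `ω(A*A) = ‖Λ A‖²` and `ω̄(A*HA) = ⟨T(Λ A), Λ A⟩`).
Then `ω̄` is gapped with some gap `Δ > 0` iff there is `Δ > 0` with
`-i ω̄(A* δ_H(A)) = ⟨(T - αg)Λ A, Λ A⟩ ≥ Δ(ω(A*A) - |ω(A)|²)` for all `A ∈ 𝔄₀`. -/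
theorem stmt18 {A₀ : Type*} [NormedRing A₀] [StarRing A₀] [CStarRing A₀]
    [NormedAlgebra ℂ A₀] [StarModule ℂ A₀] [NormedStarGroup A₀]
    {Hω : Type*} [NormedAddCommGroup Hω] [InnerProductSpace ℂ Hω]
    -- the GNS vector map Λ = λ_ω, with cyclic vector Λ 1 of norm one (ω(I) = 1):
    (Λ : A₀ →ₗ[ℂ] Hω) (hΛ1 : ‖Λ (1 : A₀)‖ = 1)
    -- T = π_ω̄(H), symmetric since H = H*:
    (T : Hω →ₗ[ℂ] Hω)
    (hT_symm : ∀ x y : Hω, (inner ℂ (T x) y : ℂ) = inner ℂ x (T y))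
    (αg : ℝ)
    -- ω̄ is an eigenstate of H with eigenvalue αg: π(H)λ(I) = αg λ(I):
    (heig : T (Λ 1) = (αg : ℂ) • Λ 1)
    -- ground state: ⟨π(H)ξ, ξ⟩ ≥ αg ‖ξ‖² on λ(𝔄₀):
    (hground : ∀ a : A₀, αg * ‖Λ a‖ ^ 2 ≤ (inner ℂ (T (Λ a)) (Λ a) : ℂ).re)
    -- nondegeneracy: Ker(π(H) - αg I) = ℂ λ(I):
    (hnondeg : ∀ a : A₀, T (Λ a) = (αg : ℂ) • Λ a → ∃ c : ℂ, Λ a = c • Λ 1) :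
    -- gapped  ↔  -i ω̄(A*δ_H(A)) ≥ Δ(ω(A*A) - |ω(A)|²)
    (∃ Δ > (0 : ℝ), ∀ a : A₀, (inner ℂ (Λ a) (Λ (1 : A₀)) : ℂ) = 0 →
        (αg + Δ) * ‖Λ a‖ ^ 2 ≤ (inner ℂ (T (Λ a)) (Λ a) : ℂ).re) ↔
    (∃ Δ > (0 : ℝ), ∀ a : A₀,
        Δ * (‖Λ a‖ ^ 2 - ‖(inner ℂ (Λ a) (Λ (1 : A₀)) : ℂ)‖ ^ 2)
          ≤ (inner ℂ (T (Λ a)) (Λ a) : ℂ).re - αg * ‖Λ a‖ ^ 2) :=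
  stmt18_general Λ hΛ1 T hT_symm αg heig
end
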